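/- Sufficient condition for non-explosion with one branching type: if the branching non-linearity consists of a single monomial a_k u^k with k ≥ 2, and |a_k| · ‖ψ‖_∞^{k-1} · (1 − e^{-βT(k-1)}) < 1, then the quantity û(0,x) = E[∏_{i=1}^{N_T} ψ(z_T^i) (a_k/p_k)^{ω_k}] is finite and bounded by ‖ψ‖_∞ / (1 − |a_k| ‖ψ‖_∞^{k-1}(1 − e^{-βT(k-1)}))^{1/(k-1)}. -/

import Mathlib

/-!
The number of branchings by time `t` satisfies the stated integral recursion, whose solution is
negative binomial: `P t n = multichoose (1/(k-1)) n · e^{-βt} (1 - e^{-β(k-1)t})^n`.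
Since `|g n| ≤ C (C^{k-1})^n` and `e^{-βT} ≤ 1`, the series is dominated termwise by
`C ∑ multichoose (1/(k-1)) n rⁿ` with `r = |a| C^{k-1} (1 - e^{-β(k-1)T}) < 1`, and this is the
binomial series of `C (1 - r)^{-1/(k-1)}`.
-/

theorem Ring.succ_mul_multichoose_succ {R : Type*} [Field R] [CharZero R] (a : R) (n : ℕ) :
    (n + 1 : R) * Ring.multichoose a (n + 1) = (a + n) * Ring.multichoose a n := by
  have hpoch (m : ℕ) : (m.factorial : R) * Ring.multichoose a m = (ascPochhammer R m).eval a := by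
    rw [← nsmul_eq_mul, Ring.factorial_nsmul_multichoose_eq_ascPochhammer,
      Polynomial.ascPochhammer_smeval_eq_eval]
  have hsucc := hpoch (n + 1)
  rw [ascPochhammer_succ_eval, ← hpoch n, Nat.factorial_succ, Nat.cast_mul, Nat.cast_succ] at hsucc
  apply mul_left_cancel₀ (Nat.cast_ne_zero.2 n.factorial_ne_zero : (n.factorial : R) ≠ 0)
  linear_combination hsucc

theorem Ring.multichoose_nonneg {a : ℝ} (ha : 0 ≤ a) (n : ℕ) : 0 ≤ Ring.multichoose a n := by
  induction n with
  | zero => simp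
  | succ n ih =>
    have h : 0 ≤ (n + 1 : ℝ) * Ring.multichoose a (n + 1) := by
      rw [Ring.succ_mul_multichoose_succ]; positivity
    exact (mul_nonneg_iff_of_pos_left (by positivity)).1 h

theorem Real.hasSum_multichoose_mul_pow (a : ℝ) {y : ℝ} (hy : |y| < 1) :
    HasSum (fun n ↦ Ring.multichoose a n * y ^ n) (1 / (1 - y) ^ a) := by
  have h := (Real.one_div_one_sub_rpow_hasFPowerSeriesOnBall_zero a).hasSum
    (y := y) (by simpa [edist_dist, Real.dist_eq] using hy)
  simpa [FormalMultilinearSeries.ofScalars_apply_eq, Ring.multichoose_eq, mul_comm] using h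

theorem integral_exp_mul_mul_exp_mul_sub_one_pow {b : ℝ} (hb : b ≠ 0) (n : ℕ) (t : ℝ) :
    ∫ s in (0 : ℝ)..t, Real.exp (b * s) * (Real.exp (b * s) - 1) ^ n
      = (Real.exp (b * t) - 1) ^ (n + 1) / (b * (n + 1)) := by
  have hderiv (s : ℝ) : HasDerivAt (fun u ↦ (Real.exp (b * u) - 1) ^ (n + 1) / (b * (n + 1)))
      (Real.exp (b * s) * (Real.exp (b * s) - 1) ^ n) s := by
    have h := ((((hasDerivAt_id s).const_mul b).exp.sub_const 1).fun_pow (n + 1)).div_const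
      (b * (n + 1))
    refine h.congr_deriv ?_
    rw [id, Nat.add_sub_cancel, Nat.cast_succ]
    field_simp
  rw [intervalIntegral.integral_eq_sub_of_hasDerivAt (fun s _ ↦ hderiv s)
    (by apply Continuous.intervalIntegrable; fun_prop)]
  simp

theorem Real.one_sub_exp_eq_exp_mul_exp_sub_one {x y : ℝ} (h : x + y = 0) :
    1 - Real.exp x = Real.exp x * (Real.exp y - 1) := by
  rw [mul_sub, ← Real.exp_add, h, Real.exp_zero, mul_one]

theorem eq_multichoose_mul_exp_of_integral_recursion {β κ : ℝ} (hβ : 0 < β) (hκ : 1 < κ)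
    {P : ℝ → ℕ → ℝ} (hP0 : ∀ t, P t 0 = Real.exp (-β * t))
    (hPrec : ∀ (t : ℝ) (n : ℕ), P t (n + 1) = β * ∫ s in (0 : ℝ)..t,
        P s n * ((κ - 1) * n + 1) * Real.exp (-β * κ * (t - s))
          * Real.exp (-β * (t - s) * ((κ - 1) * n)))
    (n : ℕ) (t : ℝ) :
    P t n = Ring.multichoose (1 / (κ - 1)) n * Real.exp (-β * t)
      * (1 - Real.exp (-β * t * (κ - 1))) ^ n := by
  have hsplit (u : ℝ) : 1 - Real.exp (-β * u * (κ - 1))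
      = Real.exp (-β * u * (κ - 1)) * (Real.exp (β * (κ - 1) * u) - 1) :=
    Real.one_sub_exp_eq_exp_mul_exp_sub_one (by ring)
  induction n generalizing t with
  | zero => simp [hP0]
  | succ n ih =>
    set m := Ring.multichoose (1 / (κ - 1)) n
    have hintegrand (s : ℝ) : P s n * ((κ - 1) * n + 1) * Real.exp (-β * κ * (t - s))
          * Real.exp (-β * (t - s) * ((κ - 1) * n))
        = m * ((κ - 1) * n + 1) * Real.exp (-β * (1 + (κ - 1) * (n + 1)) * t)
          * (Real.exp (β * (κ - 1) * s) * (Real.exp (β * (κ - 1) * s) - 1) ^ n) := by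
      have hexp : Real.exp (-β * s) * Real.exp (-β * s * (κ - 1)) ^ n
            * Real.exp (-β * κ * (t - s)) * Real.exp (-β * (t - s) * ((κ - 1) * n))
          = Real.exp (-β * (1 + (κ - 1) * (n + 1)) * t) * Real.exp (β * (κ - 1) * s) := by
        simp only [← Real.exp_nat_mul, ← Real.exp_add]
        ring_nf
      rw [ih, hsplit, mul_pow]
      linear_combination (m * ((κ - 1) * n + 1) * (Real.exp (β * (κ - 1) * s) - 1) ^ n) * hexp
    have hexp : Real.exp (-β * (1 + (κ - 1) * (n + 1)) * t)
        = Real.exp (-β * t) * Real.exp (-β * t * (κ - 1)) ^ (n + 1) := by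
      rw [← Real.exp_nat_mul, ← Real.exp_add]
      push_cast
      ring_nf
    have hnext : Ring.multichoose (1 / (κ - 1)) (n + 1)
        = ((κ - 1) * n + 1) / ((κ - 1) * (n + 1)) * m := by
      have hrec := Ring.succ_mul_multichoose_succ (1 / (κ - 1)) n
      have hκ' : κ - 1 ≠ 0 := by linarith
      field_simp at hrec ⊢
      linear_combination hrec
    rw [hPrec, intervalIntegral.integral_congr (fun s _ ↦ hintegrand s),
      intervalIntegral.integral_const_mul,
      integral_exp_mul_mul_exp_mul_sub_one_pow (by positivity), hsplit, mul_pow, hexp, hnext]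
    field_simp

theorem stmt_4_general (β T C a : ℝ) (hβ : 0 < β) (hT : 0 < T) (hC : 0 ≤ C)
    (k : ℕ) (hk : 2 ≤ k)
    (P : ℝ → ℕ → ℝ)
    (hP0 : ∀ t : ℝ, P t 0 = Real.exp (-β * t))
    (hPrec : ∀ (t : ℝ) (n : ℕ),
      P t (n + 1)
        = β * ∫ s in (0:ℝ)..t,
            P s n * ((k - 1 : ℝ) * n + 1)
              * Real.exp (-β * k * (t - s))
              * Real.exp (-β * (t - s) * ((k - 1 : ℝ) * n)))
    (hcond : |a| * C ^ (k - 1) * (1 - Real.exp (-β * T * ((k : ℝ) - 1))) < 1)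
    (g : ℕ → ℝ) (hg : ∀ n, |g n| ≤ C ^ ((k - 1) * n + 1)) :
    Summable (fun n : ℕ => P T n * a ^ n * g n) ∧
    |∑' n : ℕ, P T n * a ^ n * g n|
      ≤ C / (1 - |a| * C ^ (k - 1) * (1 - Real.exp (-β * T * ((k : ℝ) - 1))))
              ^ ((1 : ℝ) / ((k : ℝ) - 1)) := by
  have hk' : (1 : ℝ) < k := by exact_mod_cast hk
  set α : ℝ := 1 / ((k : ℝ) - 1)
  set q := 1 - Real.exp (-β * T * ((k : ℝ) - 1))
  have hq : 0 ≤ q := sub_nonneg.2 (Real.exp_le_one_iff.2 (by nlinarith [mul_pos hβ hT]))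
  set r := |a| * C ^ (k - 1) * q
  have hr : 0 ≤ r := by positivity
  have hmajorant : HasSum (fun n ↦ C * (Ring.multichoose α n * r ^ n)) (C / (1 - r) ^ α) := by
    simpa only [mul_one_div] using
      (Real.hasSum_multichoose_mul_pow α (abs_lt.2 ⟨by linarith, hcond⟩)).mul_left C
  have hterm (n : ℕ) : ‖P T n * a ^ n * g n‖ ≤ C * (Ring.multichoose α n * r ^ n) := by
    have hm : 0 ≤ Ring.multichoose α n := Ring.multichoose_nonneg (by positivity) n
    have hdecay : Real.exp (-β * T) ≤ 1 := Real.exp_le_one_iff.2 (by nlinarith)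
    rw [eq_multichoose_mul_exp_of_integral_recursion hβ hk' hP0 hPrec n T, Real.norm_eq_abs,
      abs_mul, abs_mul, abs_pow, abs_of_nonneg (by positivity)]
    calc Ring.multichoose α n * Real.exp (-β * T) * q ^ n * |a| ^ n * |g n|
        ≤ Ring.multichoose α n * 1 * q ^ n * |a| ^ n * C ^ ((k - 1) * n + 1) := by
          gcongr
          exact hg n
      _ = C * (Ring.multichoose α n * r ^ n) := by
          simp only [r, pow_succ, pow_mul, mul_pow]
          ring
  exact ⟨hmajorant.summable.of_norm_bounded hterm, tsum_of_norm_bounded hmajorant hterm⟩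

/-- Sufficient condition for non-explosion with one branching type `k ≥ 2`:
if `|a| C^{k-1} (1 - e^{-βT(k-1)}) < 1` then
`û(0,x) = E[∏ ψ(z_T^i) · a^ω] = ∑ P(T|ω=n) aⁿ g(n)` (with
`g n = E[∏_{i≤N_T} ψ(z_T^i) | ω = n]`, so `|g n| ≤ C^{(k-1)n+1}`) is finite and bounded by
`C / (1 - |a| C^{k-1}(1 - e^{-βT(k-1)}))^{1/(k-1)}`. -/
theorem stmt_4 (β T C a : ℝ) (hβ : 0 < β) (hT : 0 < T) (hC : 0 ≤ C)
    (k : ℕ) (hk : 2 ≤ k)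
    (P : ℝ → ℕ → ℝ)
    (hP0 : ∀ t : ℝ, P t 0 = Real.exp (-β * t))
    (hPnonneg : ∀ t n, 0 ≤ P t n)
    (hPrec : ∀ (t : ℝ) (n : ℕ),
      P t (n + 1)
        = β * ∫ s in (0:ℝ)..t,
            P s n * ((k - 1 : ℝ) * n + 1)
              * Real.exp (-β * k * (t - s))
              * Real.exp (-β * (t - s) * ((k - 1 : ℝ) * n)))
    (hcond : |a| * C ^ (k - 1) * (1 - Real.exp (-β * T * ((k : ℝ) - 1))) < 1)
    (g : ℕ → ℝ) (hg : ∀ n, |g n| ≤ C ^ ((k - 1) * n + 1)) :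
    Summable (fun n : ℕ => P T n * a ^ n * g n) ∧
    |∑' n : ℕ, P T n * a ^ n * g n|
      ≤ C / (1 - |a| * C ^ (k - 1) * (1 - Real.exp (-β * T * ((k : ℝ) - 1))))
              ^ ((1 : ℝ) / ((k : ℝ) - 1)) :=
  stmt_4_general β T C a hβ hT hC k hk P hP0 hPrec hcond g hg
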